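/- Invariant preservation: in the transition system above, the predicate P(s) := ∀ r, flag r = true → (st r = ready ∨ st r = inPhase1) is an inductive invariant: it holds in every initial state and is preserved by every transition rule. -/
import Mathlib

inductive RankState where
  | ready | inPhase1 | inPhase2 | exitPhase2
deriving DecidableEq

/-- Global state of the two-phase checkpoint protocol. -/
structure PState (R : Type*) where
  flag : R → Bool
  st : R → RankState

open RankState in
/-- One transition of the two-phase checkpoint protocol: some rank `r` moves. -/
inductive PStep {R : Type*} [DecidableEq R] : PState R → PState R → Prop where
  /-- enter barrier: `ready → inPhase1` (always allowed) -/
  | enterBarrier (s : PState R) (r : R) (h : s.st r = ready) :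
      PStep s ⟨s.flag, Function.update s.st r inPhase1⟩
  /-- enter collective: `inPhase1 → inPhase2`, only if the rank has not
      acknowledged intend-to-checkpoint -/
  | enterCollective (s : PState R) (r : R) (h : s.st r = inPhase1)
      (hflag : s.flag r = false) :
      PStep s ⟨s.flag, Function.update s.st r inPhase2⟩
  /-- exit collective: `inPhase2 → exitPhase2` (always allowed) -/
  | exitCollective (s : PState R) (r : R) (h : s.st r = inPhase2) :
      PStep s ⟨s.flag, Function.update s.st r exitPhase2⟩
  /-- reset: `exitPhase2 → ready` (always allowed) -/
  | reset (s : PState R) (r : R) (h : s.st r = exitPhase2) :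
      PStep s ⟨s.flag, Function.update s.st r ready⟩
  /-- acknowledge intend-to-checkpoint, only in state `ready` or `inPhase1` -/
  | ack (s : PState R) (r : R) (h : s.st r = ready ∨ s.st r = inPhase1) :
      PStep s ⟨Function.update s.flag r true, s.st⟩

open RankState in
/-- The inductive invariant: any acknowledged rank is in `ready` or `inPhase1`. -/
def PInv {R : Type*} (s : PState R) : Prop :=
  ∀ r, s.flag r = true → (s.st r = ready ∨ s.st r = inPhase1)

/-- `PInv` is an inductive invariant: it holds in every initial
state (all flags false) and is preserved by every transition. -/
theorem two_phase_inductive_invariant {R : Type*} [DecidableEq R] :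
    (∀ init : PState R, (∀ r, init.flag r = false) → PInv init) ∧
    (∀ s s' : PState R, PStep s s' → PInv s → PInv s') := by
  constructor
  · intro init h r hr
    simp [h r] at hr
  · intro s s' hstep hinv
    cases hstep with
    | enterBarrier r h =>
        intro q hq
        by_cases hqr : q = r
        · subst hqr; right; simp [Function.update_self]
        · simpa [Function.update_of_ne hqr] using hinv q hq
    | enterCollective r h hflag =>
        intro q hq
        by_cases hqr : q = r
        · subst hqr; simp_all
        · simpa [Function.update_of_ne hqr] using hinv q hq
    | exitCollective r h =>
        intro q hq
        by_cases hqr : q = r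
        · subst hqr
          rcases hinv q hq with h' | h' <;> simp_all
        · simpa [Function.update_of_ne hqr] using hinv q hq
    | reset r h =>
        intro q hq
        by_cases hqr : q = r
        · subst hqr; left; simp [Function.update_self]
        · simpa [Function.update_of_ne hqr] using hinv q hq
    | ack r h =>
        intro q hq
        by_cases hqr : q = r
        · subst hqr; exact h
        · exact hinv q (by simpa [Function.update_of_ne hqr] using hq)
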